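/- arXiv:2403.03921 — 15 statements merged into one kernel-verified Lean document; each statement's English description precedes it below -/
import Mathlib

section
/- A set B of vertices of a graph G is a zero forcing set if and only if B intersects every fort of G. -/
/-- A fort of a graph: a nonempty set `F` such that every vertex outside `F`
has zero or at least two neighbors in `F`. -/
def IsFort {V : Type*} (G : SimpleGraph V) (F : Set V) : Prop :=
  F.Nonempty ∧ ∀ v ∉ F, ∀ w ∈ F, G.Adj v w → ∃ w' ∈ F, w' ≠ w ∧ G.Adj v w'

/-- The set of vertices that eventually become blue starting from the
initial blue set `B`, via the color change rule: a blue vertex `u` forces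
its white neighbor `w` if `w` is the only white neighbor of `u`. -/
inductive Forced {V : Type*} (G : SimpleGraph V) (B : Set V) : V → Prop
  | init : ∀ v, v ∈ B → Forced G B v
  | force : ∀ u w, G.Adj u w → Forced G B u →
      (∀ x, G.Adj u x → x ≠ w → Forced G B x) → Forced G B w

/-- A zero forcing set: starting from `B` blue, eventually every vertex is blue. -/
def IsZeroForcingSet {V : Type*} (G : SimpleGraph V) (B : Set V) : Prop :=
  ∀ v : V, Forced G B v

theorem zfs_iff_meets_every_fort {V : Type*} [Fintype V] (G : SimpleGraph V)
    (B : Set V) :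
    IsZeroForcingSet G B ↔ ∀ F : Set V, IsFort G F → (B ∩ F).Nonempty := by
  constructor
  · intro hzfs F hF
    by_contra hempty
    rw [Set.not_nonempty_iff_eq_empty] at hempty
    have key : ∀ v : V, Forced G B v → v ∉ F := by
      intro v hv
      induction hv with
      | init v hvB =>
        intro hvF
        exact Set.eq_empty_iff_forall_notMem.mp hempty v ⟨hvB, hvF⟩
      | force u w hadj hu hforce ihu ih =>
        intro hwF
        obtain ⟨w', hw'F, hw'ne, hadj'⟩ := hF.2 u ihu w hwF hadj
        exact ih w' hadj' hw'ne hw'F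
    obtain ⟨x, hxF⟩ := hF.1
    exact key x (hzfs x) hxF
  · intro hforts
    by_contra hnz
    simp only [IsZeroForcingSet, not_forall] at hnz
    obtain ⟨v, hv⟩ := hnz
    set F : Set V := {x | ¬ Forced G B x} with hFdef
    have hFort : IsFort G F := by
      constructor
      · exact ⟨v, hv⟩
      · intro u hu w hwF hadj
        by_contra hno
        push_neg at hno
        have : Forced G B u := not_not.mp hu
        exact hwF (Forced.force u w hadj this (fun x hx hxw => by
          by_contra hxn
          exact hno x hxn hxw hx))
    obtain ⟨b, hbB, hbF⟩ := hforts F hFort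
    exact hbF (Forced.init b hbB)
end

section
/- A vertex v of a graph G is contained in some minimal zero forcing set of G if and only if v is contained in some minimal fort of G. -/
/-- A zero forcing set, characterized as a set intersecting every fort. -/
def IsZFS {V : Type*} (G : SimpleGraph V) (B : Set V) : Prop :=
  ∀ F : Set V, IsFort G F → (B ∩ F).Nonempty

/-- A Z-irredundant set: every element has a private fort. -/
def IsZIr {V : Type*} (G : SimpleGraph V) (S : Set V) : Prop :=
  ∀ x ∈ S, ∃ F : Set V, IsFort G F ∧ S ∩ F = {x}

/-- A maximal Z-irredundant set. -/
def IsMaxZIr {V : Type*} (G : SimpleGraph V) (S : Set V) : Prop :=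
  IsZIr G S ∧ ∀ T : Set V, IsZIr G T → S ⊆ T → S = T

/-- The upper ZIr number: maximum cardinality of a maximal ZIr-set. -/
noncomputable def ZIR {V : Type*} (G : SimpleGraph V) : ℕ :=
  sSup {n | ∃ S : Set V, IsMaxZIr G S ∧ S.ncard = n}

/-- The lower ZIr number: minimum cardinality of a maximal ZIr-set. -/
noncomputable def zir {V : Type*} (G : SimpleGraph V) : ℕ :=
  sInf {n | ∃ S : Set V, IsMaxZIr G S ∧ S.ncard = n}

/-- A minimal fort. -/
def IsMinFort {V : Type*} (G : SimpleGraph V) (F : Set V) : Prop :=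
  IsFort G F ∧ ∀ F' : Set V, IsFort G F' → F' ⊆ F → F' = F

/-- A minimal zero forcing set. -/
def IsMinZFS {V : Type*} (G : SimpleGraph V) (B : Set V) : Prop :=
  IsZFS G B ∧ ∀ B' : Set V, IsZFS G B' → B' ⊆ B → B' = B

lemma exists_minimal_subset' {V : Type*} [Fintype V] (P : Set V → Prop) (B : Set V) (hB : P B) :
    ∃ B' ⊆ B, P B' ∧ ∀ C : Set V, P C → C ⊆ B' → C = B' := by
  classical
  have h : ∀ n : ℕ, ∀ B : Set V, B.ncard ≤ n → P B →
      ∃ B' ⊆ B, P B' ∧ ∀ C : Set V, P C → C ⊆ B' → C = B' := by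
    intro n
    induction n with
    | zero =>
      intro B hn hB
      refine ⟨B, subset_rfl, hB, fun C hC hCB => ?_⟩
      have : B = ∅ := Set.ncard_eq_zero (Set.toFinite B) |>.mp (Nat.le_zero.mp hn)
      subst this
      exact Set.subset_eq_empty hCB rfl
    | succ n ih =>
      intro B hn hB
      by_cases h : ∀ C : Set V, P C → C ⊆ B → C = B
      · exact ⟨B, subset_rfl, hB, h⟩
      · push_neg at h
        obtain ⟨C, hPC, hCB, hne⟩ := h
        have hss : C ⊂ B := ⟨hCB, fun h' => hne (subset_antisymm hCB h')⟩
        have : C.ncard ≤ n := by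
          have := Set.ncard_lt_ncard hss (Set.toFinite B); omega
        obtain ⟨B', h1, h2, h3⟩ := ih C this hPC
        exact ⟨B', h1.trans hCB, h2, h3⟩
  exact h B.ncard B le_rfl hB

theorem mem_minimal_zfs_iff_mem_minimal_fort {V : Type*} [Fintype V]
    (G : SimpleGraph V) (v : V) :
    (∃ B : Set V, IsMinZFS G B ∧ v ∈ B) ↔
      (∃ F : Set V, IsMinFort G F ∧ v ∈ F) := by
  constructor
  · rintro ⟨B, ⟨hBzfs, hBmin⟩, hvB⟩
    -- B \ {v} is not a ZFS
    have hnot : ¬ IsZFS G (B \ {v}) := by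
      intro h
      have heq := hBmin _ h Set.diff_subset
      rw [← heq] at hvB
      exact hvB.2 rfl
    rw [IsZFS] at hnot
    push_neg at hnot
    obtain ⟨F, hF, hempty⟩ := hnot
    have hBF : B ∩ F ⊆ {v} := by
      intro x ⟨hxB, hxF⟩
      by_contra hxv
      exact absurd hempty (Set.nonempty_iff_ne_empty.mp ⟨x, ⟨hxB, hxv⟩, hxF⟩)
    obtain ⟨F', hF'F, hF'fort, hF'min⟩ := exists_minimal_subset' (IsFort G) F hF
    refine ⟨F', ⟨hF'fort, hF'min⟩, ?_⟩
    obtain ⟨x, hxB, hxF'⟩ := hBzfs F' hF'fort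
    have : x ∈ ({v} : Set V) := hBF ⟨hxB, hF'F hxF'⟩
    rwa [this] at hxF'
  · rintro ⟨F, ⟨hFfort, hFmin⟩, hvF⟩
    -- Fᶜ ∪ {v} is a ZFS
    have hzfs : IsZFS G (Fᶜ ∪ {v}) := by
      intro F' hF'
      by_cases h : F' ⊆ F
      · have := hFmin F' hF' h
        subst this
        exact ⟨v, Or.inr rfl, hvF⟩
      · obtain ⟨x, hxF', hxF⟩ := Set.not_subset.mp h
        exact ⟨x, Or.inl hxF, hxF'⟩
    obtain ⟨B', hB'sub, hB'zfs, hB'min⟩ := exists_minimal_subset' (IsZFS G) _ hzfs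
    refine ⟨B', ⟨hB'zfs, hB'min⟩, ?_⟩
    obtain ⟨x, hxB', hxF⟩ := hB'zfs F hFfort
    rcases hB'sub hxB' with h | h
    · exact absurd hxF h
    · rwa [h] at hxB'
end

section
/- If B is a minimal zero forcing set of a graph G, then every element of B belongs to some minimal fort of G. -/
lemma exists_minFort_subset {V : Type*} [Fintype V] (G : SimpleGraph V) :
    ∀ n (F : Set V), F.ncard ≤ n → IsFort G F → ∃ M ⊆ F, IsMinFort G M := by
  intro n
  induction n with
  | zero =>
    intro F hn hF
    have := hF.1
    have : F.ncard ≠ 0 := by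
      simpa [Set.ncard_eq_zero (Set.toFinite F)] using this.ne_empty
    omega
  | succ n ih =>
    intro F hn hF
    by_cases hmin : ∀ F' : Set V, IsFort G F' → F' ⊆ F → F' = F
    · exact ⟨F, subset_rfl, hF, hmin⟩
    · push_neg at hmin
      obtain ⟨F', hF', hsub, hne⟩ := hmin
      have hlt : F'.ncard < F.ncard :=
        Set.ncard_lt_ncard (hsub.ssubset_of_ne hne) (Set.toFinite F)
      obtain ⟨M, hM, hMmin⟩ := ih F' (by omega) hF'
      exact ⟨M, hM.trans hsub, hMmin⟩

theorem minimal_zfs_elements_in_minimal_forts {V : Type*} [Fintype V]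
    (G : SimpleGraph V) (B : Set V) (hB : IsMinZFS G B) :
    ∀ x ∈ B, ∃ F : Set V, IsMinFort G F ∧ x ∈ F := by
  intro x hx
  -- B \ {x} is not a ZFS
  have hnot : ¬ IsZFS G (B \ {x}) := by
    intro h
    have := hB.2 (B \ {x}) h Set.diff_subset
    exact (this ▸ hx).2 rfl
  simp only [IsZFS, not_forall] at hnot
  obtain ⟨F, hF, hempty⟩ := hnot
  rw [Set.not_nonempty_iff_eq_empty] at hempty
  -- every fort subset of F contains x
  have key : ∀ F' : Set V, IsFort G F' → F' ⊆ F → x ∈ F' := by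
    intro F' hF' hsub
    obtain ⟨y, hyB, hyF'⟩ := hB.1 F' hF'
    have : y ∈ (B \ {x}) ∩ F ∨ y = x := by
      by_cases hyx : y = x
      · exact Or.inr hyx
      · exact Or.inl ⟨⟨hyB, hyx⟩, hsub hyF'⟩
    rcases this with h | h
    · rw [hempty] at h; exact absurd h (Set.notMem_empty y)
    · exact h ▸ hyF'
  obtain ⟨M, hMsub, hMmin⟩ := exists_minFort_subset G (F.ncard) F le_rfl hF
  exact ⟨M, hMmin, key M hMmin.1 hMsub⟩
end

section
/- A set S of vertices of a graph G is a minimal zero forcing set if and only if S is a maximal Z-irredundant set and S intersects every fort of G. -/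
theorem minimal_zfs_iff_maximal_zir_and_meets_forts {V : Type*} [Fintype V]
    (G : SimpleGraph V) (S : Set V) :
    (IsZFS G S ∧ ∀ B' : Set V, IsZFS G B' → B' ⊆ S → B' = S) ↔
      (IsMaxZIr G S ∧ ∀ F : Set V, IsFort G F → (S ∩ F).Nonempty) := by

  constructor
  · rintro ⟨hZFS, hmin⟩
    refine ⟨⟨?_, ?_⟩, hZFS⟩
    · intro x hx
      have hnz : ¬ IsZFS G (S \ {x}) := by
        intro h
        have heq := hmin _ h Set.diff_subset
        have hxmem : x ∈ S \ {x} := by rw [heq]; exact hx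
        exact hxmem.2 rfl
      rw [IsZFS] at hnz
      push_neg at hnz
      obtain ⟨F, hF, hempty⟩ := hnz
      refine ⟨F, hF, ?_⟩
      ext y
      constructor
      · rintro ⟨hyS, hyF⟩
        by_contra hyx
        have : y ∈ (S \ {x}) ∩ F := ⟨⟨hyS, hyx⟩, hyF⟩
        simp [hempty] at this
      · rintro rfl
        obtain ⟨z, hzS, hzF⟩ := hZFS F hF
        by_cases hzx : z = y
        · exact hzx ▸ ⟨hzS, hzF⟩
        · exact (Set.eq_empty_iff_forall_notMem.mp hempty z ⟨⟨hzS, hzx⟩, hzF⟩).elim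
    · intro T hT hST
      by_contra hne
      obtain ⟨x, hxT, hxS⟩ : ∃ x, x ∈ T ∧ x ∉ S := by
        by_contra h
        push_neg at h
        exact hne (Set.Subset.antisymm hST h)
      obtain ⟨F, hF, hTF⟩ := hT x hxT
      obtain ⟨z, hzS, hzF⟩ := hZFS F hF
      have hz : z ∈ T ∩ F := ⟨hST hzS, hzF⟩
      rw [hTF] at hz
      have : z = x := hz
      exact hxS (this ▸ hzS)
  · rintro ⟨⟨hZIr, hmax⟩, hZFS⟩
    refine ⟨hZFS, ?_⟩
    intro B' hB' hsub
    refine Set.Subset.antisymm hsub ?_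
    intro x hx
    by_contra hxB
    obtain ⟨F, hF, hSF⟩ := hZIr x hx
    obtain ⟨z, hzB, hzF⟩ := hB' F hF
    have hz : z ∈ S ∩ F := ⟨hsub hzB, hzF⟩
    rw [hSF] at hz
    have : z = x := hz
    exact hxB (this ▸ hzB)
end

section
/- Let G be a graph with no isolated vertices and let S ⊆ V(G). If there exists a vertex v with N[v] ⊆ S, then S is not a Z-irredundant set. Equivalently, if S is a Z-irredundant set, then V(G) \ S is a dominating set of G. -/
lemma closed_nbhd_subset_not_zir_aux {V : Type*} [Fintype V]
    (G : SimpleGraph V) (S : Set V) (hiso : ∀ v : V, ∃ u, G.Adj v u) :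
    (∃ v : V, insert v (G.neighborSet v) ⊆ S) → ¬ IsZIr G S := by
  rintro ⟨v, hv⟩ hS
  obtain ⟨u, hadj⟩ := hiso v
  have huS : u ∈ S := hv (Set.mem_insert_iff.mpr (Or.inr hadj))
  obtain ⟨F, hF, hpriv⟩ := hS u huS
  have huF : u ∈ F := by
    have : u ∈ S ∩ F := hpriv ▸ rfl
    exact this.2
  have hvF : v ∉ F := by
    intro h
    have : v ∈ S ∩ F := ⟨hv (Set.mem_insert v _), h⟩
    rw [hpriv] at this
    exact G.ne_of_adj hadj this
  obtain ⟨w', hw'F, hw'ne, hw'adj⟩ := hF.2 v hvF u huF hadj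
  have hw'S : w' ∈ S := hv (Set.mem_insert_iff.mpr (Or.inr hw'adj))
  have : w' ∈ S ∩ F := ⟨hw'S, hw'F⟩
  rw [hpriv] at this
  exact hw'ne this

theorem closed_nbhd_subset_not_zir {V : Type*} [Fintype V]
    (G : SimpleGraph V) (S : Set V) (hiso : ∀ v : V, ∃ u, G.Adj v u) :
    ((∃ v : V, insert v (G.neighborSet v) ⊆ S) → ¬ IsZIr G S) ∧
      (IsZIr G S → ∀ v : V, v ∈ Sᶜ ∨ ∃ u ∈ (Sᶜ : Set V), G.Adj v u) := by
  constructor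
  · rintro ⟨v, hv⟩ hS
    obtain ⟨u, hadj⟩ := hiso v
    have huS : u ∈ S := hv (Set.mem_insert_iff.mpr (Or.inr hadj))
    obtain ⟨F, hF, hpriv⟩ := hS u huS
    have huF : u ∈ F := by
      have : u ∈ S ∩ F := hpriv ▸ rfl
      exact this.2
    have hvF : v ∉ F := by
      intro h
      have : v ∈ S ∩ F := ⟨hv (Set.mem_insert v _), h⟩
      rw [hpriv] at this
      exact G.ne_of_adj hadj this
    obtain ⟨w', hw'F, hw'ne, hw'adj⟩ := hF.2 v hvF u huF hadj
    have hw'S : w' ∈ S := hv (Set.mem_insert_iff.mpr (Or.inr hw'adj))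
    have : w' ∈ S ∩ F := ⟨hw'S, hw'F⟩
    rw [hpriv] at this
    exact hw'ne this
  · intro hS v
    by_contra hc
    push_neg at hc
    obtain ⟨h1, h2⟩ := hc
    have hvS : v ∈ S := by simpa using h1
    refine (closed_nbhd_subset_not_zir_aux G S hiso ⟨v, ?_⟩) hS
    intro x hx
    rcases Set.mem_insert_iff.mp hx with rfl | hadj
    · exact hvS
    · by_contra hxS
      exact (h2 x (by simpa using hxS)) hadj
end

section
/- Let G be a graph and d ≥ 1. If v_1, ..., v_d are d vertices of G each of degree at least d, then S = {v_1, ..., v_d} is a Z-irredundant set of G. -/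
theorem zir_of_degrees_ge {V : Type*} [Fintype V] (G : SimpleGraph V)
    [DecidableRel G.Adj] (d : ℕ) (hd : 1 ≤ d) (v : Fin d → V)
    (hinj : Function.Injective v) (hdeg : ∀ i, d ≤ G.degree (v i)) :
    IsZIr G (Set.range v) := by
  classical
  rintro x ⟨i, rfl⟩
  refine ⟨{y | y ∉ Set.range v ∨ y = v i}, ⟨⟨v i, Or.inr rfl⟩, ?_⟩, ?_⟩
  · intro u hu w hw hadj
    simp only [Set.mem_setOf_eq, not_or, not_not] at hu
    obtain ⟨⟨j, rfl⟩, hji⟩ := hu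
    set F : Set V := {y | y ∉ Set.range v ∨ y = v i} with hF
    set N := G.neighborFinset (v j) with hN
    set bad : Finset V := ((Finset.univ.image v).erase (v i)).erase (v j) with hbad
    have hbadcard : bad.card = d - 2 := by
      have h1 : (Finset.univ.image v).card = d := by
        rw [Finset.card_image_of_injective _ hinj, Finset.card_univ, Fintype.card_fin]
      have hvi : v i ∈ Finset.univ.image v := Finset.mem_image_of_mem v (Finset.mem_univ i)
      have hvj : v j ∈ (Finset.univ.image v).erase (v i) := by
        refine Finset.mem_erase.mpr ⟨hji, Finset.mem_image_of_mem v (Finset.mem_univ j)⟩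
      rw [hbad, Finset.card_erase_of_mem hvj, Finset.card_erase_of_mem hvi, h1]
      omega
    have hsub : N.filter (fun y => y ∉ F) ⊆ bad := by
      intro y hy
      simp only [Finset.mem_filter, hN, SimpleGraph.mem_neighborFinset] at hy
      obtain ⟨hadjy, hyF⟩ := hy
      simp only [hF, Set.mem_setOf_eq, not_or, not_not] at hyF
      obtain ⟨⟨k, rfl⟩, hki⟩ := hyF
      refine Finset.mem_erase.mpr ⟨fun h => G.irrefl (h ▸ hadjy), Finset.mem_erase.mpr
        ⟨hki, Finset.mem_image_of_mem v (Finset.mem_univ k)⟩⟩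
    have hkey : 2 ≤ (N.filter (fun y => y ∈ F)).card := by
      have hsplit : (N.filter (fun y => y ∈ F)).card + (N.filter (fun y => y ∉ F)).card
          = N.card := Finset.card_filter_add_card_filter_not _
      have hNc : d ≤ N.card := hdeg j
      have hb : (N.filter (fun y => y ∉ F)).card ≤ bad.card :=
        Finset.card_le_card hsub
      rw [hbadcard] at hb
      have hij : (j : ℕ) ≠ (i : ℕ) := fun h => hji (congrArg v (Fin.ext h))
      have h2 : 2 ≤ d := by have := j.isLt; have := i.isLt; omega
      omega
    have hwmem : w ∈ N.filter (fun y => y ∈ F) := by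
      simp only [Finset.mem_filter, hN, SimpleGraph.mem_neighborFinset]
      exact ⟨hadj, hw⟩
    obtain ⟨w', hw', hne⟩ := Finset.exists_mem_ne (s := N.filter (fun y => y ∈ F)) (by omega) w
    simp only [Finset.mem_filter, hN, SimpleGraph.mem_neighborFinset] at hw'
    exact ⟨w', hw'.2, hne, hw'.1⟩
  · ext y
    simp only [Set.mem_inter_iff, Set.mem_setOf_eq, Set.mem_singleton_iff]
    constructor
    · rintro ⟨hy, h | h⟩
      · exact absurd hy h
      · exact h
    · rintro rfl
      exact ⟨⟨i, rfl⟩, Or.inr rfl⟩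
end

section
/- For every graph G with minimum degree δ(G) ≥ 1, every set of δ(G) vertices is a Z-irredundant set, and hence δ(G) ≤ zir(G), where zir(G) is the minimum cardinality of a maximal Z-irredundant set. -/
/-- Any set of at most `δ(G)` vertices is Z-irredundant: for `x ∈ S`,
the complement of `S \ {x}` is a private fort of `x` relative to `S`. -/
lemma zir_aux {V : Type*} [Fintype V] (G : SimpleGraph V) [DecidableRel G.Adj]
    (S : Set V) (hS : S.ncard ≤ G.minDegree) : IsZIr G S := by
  intro x hx
  refine ⟨(S \ {x})ᶜ, ⟨⟨x, by simp⟩, ?_⟩, ?_⟩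
  · intro v hv w hw hvw
    rw [Set.mem_compl_iff, not_not] at hv
    set A : Set V := S \ {x} with hA
    set N : Set V := ↑(G.neighborFinset v) with hNdef
    have hvN : v ∉ N := by simp [hNdef]
    have hN : G.minDegree ≤ N.ncard := by
      rw [hNdef, Set.ncard_coe_finset]
      exact G.minDegree_le_degree v
    have h1 : (A \ {v}).ncard + 1 = A.ncard :=
      Set.ncard_diff_singleton_add_one hv (Set.toFinite _)
    have h2 : A.ncard + 1 = S.ncard :=
      Set.ncard_diff_singleton_add_one hx (Set.toFinite _)
    have h3 : (N ∩ A).ncard ≤ (A \ {v}).ncard := by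
      apply Set.ncard_le_ncard _ (Set.toFinite _)
      intro u hu
      exact ⟨hu.2, fun h => hvN (h ▸ hu.1)⟩
    have h4 : (N ∩ A).ncard + (N \ A).ncard = N.ncard :=
      Set.ncard_inter_add_ncard_diff_eq_ncard N A (Set.toFinite _)
    have h5 : 1 < (N \ A).ncard := by omega
    obtain ⟨w', hw', hne⟩ := Set.exists_ne_of_one_lt_ncard h5 w
    exact ⟨w', hw'.2, hne, by simpa [hNdef] using hw'.1⟩
  · ext y
    simp only [Set.mem_inter_iff, Set.mem_compl_iff, Set.mem_diff, Set.mem_singleton_iff]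
    constructor
    · rintro ⟨hy, h⟩
      by_contra hne
      exact h ⟨hy, hne⟩
    · rintro rfl
      exact ⟨hx, fun h => h.2 rfl⟩

theorem minDegree_sets_zir_and_le_zir {V : Type*} [Fintype V] [Nonempty V]
    (G : SimpleGraph V) [DecidableRel G.Adj] (hδ : 1 ≤ G.minDegree) :
    (∀ S : Set V, S.ncard = G.minDegree → IsZIr G S) ∧
      G.minDegree ≤ zir G := by
  refine ⟨fun S hS => zir_aux G S hS.le, ?_⟩
  -- every maximal ZIr set has at least δ elements
  have key : ∀ S : Set V, IsMaxZIr G S → G.minDegree ≤ S.ncard := by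
    intro S hmax
    by_contra hlt
    push_neg at hlt
    have hδcard : G.minDegree < Fintype.card V :=
      lt_of_le_of_lt (G.minDegree_le_degree (Classical.arbitrary V))
        (G.degree_lt_card_verts _)
    have hne : S ≠ Set.univ := by
      intro h
      rw [h, Set.ncard_univ, Nat.card_eq_fintype_card] at hlt
      omega
    obtain ⟨y, hy⟩ : ∃ y, y ∉ S := by
      by_contra h
      push_neg at h
      exact hne (Set.eq_univ_of_forall h)
    have hT : IsZIr G (insert y S) := by
      apply zir_aux
      rw [Set.ncard_insert_of_notMem hy (Set.toFinite _)]
      omega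
    have := hmax.2 _ hT (Set.subset_insert y S)
    exact hy (this ▸ Set.mem_insert y S)
  -- there exists a maximal ZIr set
  have hex : ∃ S : Set V, IsMaxZIr G S := by
    set K : Set ℕ := {n | ∃ S : Set V, IsZIr G S ∧ S.ncard = n} with hK
    have hKne : K.Nonempty := ⟨0, ∅, fun x hx => absurd hx (Set.notMem_empty x), Set.ncard_empty V⟩
    have hKbdd : BddAbove K := by
      refine ⟨Fintype.card V, fun n hn => ?_⟩
      obtain ⟨S, _, rfl⟩ := hn
      exact le_trans (Set.ncard_le_ncard (Set.subset_univ S) (Set.toFinite _))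
        (by rw [Set.ncard_univ, Nat.card_eq_fintype_card])
    obtain ⟨S, hSzir, hScard⟩ := Nat.sSup_mem hKne hKbdd
    refine ⟨S, hSzir, fun T hT hsub => ?_⟩
    have hTle : T.ncard ≤ S.ncard := by
      rw [hScard]
      exact le_csSup hKbdd ⟨T, hT, rfl⟩
    exact Set.eq_of_subset_of_ncard_le hsub hTle (Set.toFinite _)
  obtain ⟨S, hS⟩ := hex
  have hmem : S.ncard ∈ {n | ∃ S : Set V, IsMaxZIr G S ∧ S.ncard = n} := ⟨S, hS, rfl⟩
  obtain ⟨T, hT, hTcard⟩ := Nat.sInf_mem (⟨S.ncard, hmem⟩ :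
    Set.Nonempty {n | ∃ S : Set V, IsMaxZIr G S ∧ S.ncard = n})
  rw [zir]
  exact le_of_le_of_eq (key T hT) hTcard
end

section
/- For a graph G of order n ≥ 2 having at least one edge, ZIR(G) ≤ n − 1, where ZIR(G) denotes the maximum cardinality of a maximal Z-irredundant set. -/
theorem ZIR_le_card_sub_one {V : Type*} [Fintype V] (G : SimpleGraph V)
    (hn : 2 ≤ Fintype.card V) (he : ∃ u w : V, G.Adj u w) :
    ZIR G ≤ Fintype.card V - 1 := by
  apply csSup_le'
  rintro n ⟨S, ⟨hZIr, _⟩, rfl⟩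
  -- S is a proper subset of univ
  obtain ⟨u, w, huw⟩ := he
  have hSne : S ≠ Set.univ := by
    rintro rfl
    obtain ⟨F, hF, hFu⟩ := hZIr u trivial
    have hFeq : F = {u} := by
      rw [← hFu]; simp [Set.inter_eq_right.mpr (Set.subset_univ F)]
    subst hFeq
    have hw : w ∉ ({u} : Set V) := by
      intro hmem
      simp only [Set.mem_singleton_iff] at hmem
      exact G.ne_of_adj huw hmem.symm
    obtain ⟨w', hw', hne, _⟩ := hF.2 w hw u rfl huw.symm
    exact hne hw'
  have hlt : S.ncard < Fintype.card V := by
    have h := Set.ncard_lt_ncard (Set.ssubset_univ_iff.mpr hSne) Set.finite_univ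
    simpa [Set.ncard_univ, Nat.card_eq_fintype_card] using h
  omega
end

section
/- If D is a 2-dominating set of a graph G, then S = V(G) \ D is a Z-irredundant set of G; consequently, for a graph of order n, ZIR(G) ≥ n − γ_2(G), where γ_2(G) is the 2-domination number. -/
/-- A 2-dominating set: every vertex not in `D` has at least two neighbors in `D`. -/
def Is2Dom {V : Type*} (G : SimpleGraph V) (D : Set V) : Prop :=
  ∀ v ∉ D, ∃ u ∈ D, ∃ w ∈ D, u ≠ w ∧ G.Adj v u ∧ G.Adj v w

/-- The 2-domination number. -/
noncomputable def gamma2 {V : Type*} (G : SimpleGraph V) : ℕ :=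
  sInf {n | ∃ D : Set V, Is2Dom G D ∧ D.ncard = n}

/-! Outside a 2-dominating set `D` every vertex already sees two vertices of `D`, so every superset
of `D` is a fort. For `x ∉ D` the fort `insert x D` meets `Dᶜ` only in `x`, hence `Dᶜ` is
Z-irredundant. Taking `D` of size `γ₂(G)` and extending `Dᶜ` to a maximal Z-irredundant set gives
`ZIR(G) ≥ n - γ₂(G)`. -/

section

variable {V : Type*} {G : SimpleGraph V} {D F : Set V}

theorem Is2Dom.isFort_of_subset (hD : Is2Dom G D) (hDF : D ⊆ F) (hF : F.Nonempty) :
    IsFort G F := by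
  refine ⟨hF, fun v hv w _ _ => ?_⟩
  obtain ⟨u, hu, u', hu', hne, hvu, hvu'⟩ := hD v (fun hvD => hv (hDF hvD))
  by_cases hwu : w = u
  · exact ⟨u', hDF hu', hwu ▸ hne.symm, hvu'⟩
  · exact ⟨u, hDF hu, Ne.symm hwu, hvu⟩

theorem Is2Dom.isZIr_compl (hD : Is2Dom G D) : IsZIr G Dᶜ := by
  intro x hx
  refine ⟨insert x D, hD.isFort_of_subset (Set.subset_insert x D) (Set.insert_nonempty x D), ?_⟩
  rw [Set.inter_insert_of_mem hx, Set.compl_inter_self, LawfulSingleton.insert_empty_eq]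

theorem exists_is2Dom_ncard_eq_gamma2 (G : SimpleGraph V) :
    ∃ D, Is2Dom G D ∧ D.ncard = gamma2 G :=
  Nat.sInf_mem (s := {n | ∃ D : Set V, Is2Dom G D ∧ D.ncard = n})
    ⟨_, Set.univ, fun v hv => absurd (Set.mem_univ v) hv, rfl⟩

theorem IsZIr.ncard_le_ZIR [Finite V] {S : Set V} (hS : IsZIr G S) : S.ncard ≤ ZIR G := by
  obtain ⟨T, hST, hT⟩ := Finite.exists_le_maximal (p := IsZIr G) hS
  have hTmax : IsMaxZIr G T := ⟨hT.prop, fun _ hU hTU => hT.eq_of_le hU hTU⟩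
  have hbdd : BddAbove {n | ∃ S : Set V, IsMaxZIr G S ∧ S.ncard = n} :=
    ⟨Nat.card V, by rintro _ ⟨U, -, rfl⟩; exact Set.ncard_le_card U⟩
  exact (Set.ncard_le_ncard hST).trans (le_csSup hbdd ⟨T, hTmax, rfl⟩)

end

theorem compl_two_dom_zir_and_ZIR_ge {V : Type*} [Fintype V]
    (G : SimpleGraph V) (D : Set V) (hD : Is2Dom G D) :
    IsZIr G Dᶜ ∧ Fintype.card V - gamma2 G ≤ ZIR G := by
  refine ⟨hD.isZIr_compl, ?_⟩
  obtain ⟨D₀, hD₀, hcard⟩ := exists_is2Dom_ncard_eq_gamma2 G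
  calc Fintype.card V - gamma2 G = D₀ᶜ.ncard := by
        rw [Set.ncard_compl, hcard, Nat.card_eq_fintype_card]
    _ ≤ ZIR G := hD₀.isZIr_compl.ncard_le_ZIR
end

section
/- For a graph G of order n ≥ 2 with no isolated vertices, ZIR(G) ≤ n − γ(G), where γ(G) is the domination number and ZIR(G) is the maximum cardinality of a maximal Z-irredundant set. -/
/-- A dominating set. -/
def IsDom {V : Type*} (G : SimpleGraph V) (D : Set V) : Prop :=
  ∀ v : V, v ∈ D ∨ ∃ u ∈ D, G.Adj v u

/-- The domination number. -/
noncomputable def gamma {V : Type*} (G : SimpleGraph V) : ℕ :=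
  sInf {n | ∃ D : Set V, IsDom G D ∧ D.ncard = n}

/-- In a graph with no isolated vertices, every element of a ZIr-set has a
neighbor outside the set. -/
lemma ZIr_external_neighbor {V : Type*} {G : SimpleGraph V} {S : Set V}
    (hS : IsZIr G S) (hiso : ∀ v : V, ∃ u, G.Adj v u) :
    ∀ x ∈ S, ∃ u ∉ S, G.Adj x u := by
  intro x hx
  by_contra h
  push_neg at h
  -- all neighbors of x lie in S
  obtain ⟨u, hxu⟩ := hiso x
  have huS : u ∈ S := by by_contra hc; exact h u hc hxu
  obtain ⟨F, hF, hFu⟩ := hS u huS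
  have hxF : x ∉ F := by
    intro hxF
    have : x ∈ S ∩ F := ⟨hx, hxF⟩
    rw [hFu] at this
    exact G.ne_of_adj hxu this
  have huF : u ∈ F := by
    have : u ∈ S ∩ F := by rw [hFu]; rfl
    exact this.2
  obtain ⟨w, hwF, hwu, hxw⟩ := hF.2 x hxF u huF hxu
  have hwS : w ∈ S := by by_contra hc; exact h w hc hxw
  have : w ∈ S ∩ F := ⟨hwS, hwF⟩
  rw [hFu] at this
  exact hwu this

theorem ZIR_le_card_sub_gamma {V : Type*} [Fintype V] (G : SimpleGraph V)
    (hn : 2 ≤ Fintype.card V) (hiso : ∀ v : V, ∃ u, G.Adj v u) :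
    ZIR G ≤ Fintype.card V - gamma G := by
  unfold ZIR
  rcases Set.eq_empty_or_nonempty {n | ∃ S : Set V, IsMaxZIr G S ∧ S.ncard = n} with he | hne
  · rw [he]
    simp
  · apply csSup_le hne
    rintro n ⟨S, hS, rfl⟩
    -- Sᶜ is a dominating set
    have hdom : IsDom G Sᶜ := by
      intro v
      by_cases hv : v ∈ S
      · obtain ⟨u, huS, hvu⟩ := ZIr_external_neighbor hS.1 hiso v hv
        exact Or.inr ⟨u, huS, hvu⟩
      · exact Or.inl hv
    have hgamma : gamma G ≤ (Sᶜ : Set V).ncard :=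
      Nat.sInf_le ⟨Sᶜ, hdom, rfl⟩
    have hcard : S.ncard + (Sᶜ : Set V).ncard = Fintype.card V := by
      rw [← Nat.card_eq_fintype_card, ← Set.ncard_univ V, ← Set.ncard_union_eq disjoint_compl_right S.toFinite
        (Sᶜ : Set V).toFinite, Set.union_compl_self]
    omega
end

section
/- For a connected graph G of order n ≥ 2, ZIR(G) ≤ (Δ(G)/(Δ(G)+1))·n, where Δ(G) is the maximum degree and ZIR(G) is the maximum cardinality of a maximal Z-irredundant set. -/
/-- Every element of a ZIr set has a neighbor outside the set (for connected graphs
of order at least 2). -/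
lemma exists_adj_notMem_of_isZIr {V : Type*} [Fintype V] (G : SimpleGraph V)
    (hn : 2 ≤ Fintype.card V) (hconn : G.Connected) {S : Set V} (hS : IsZIr G S)
    {x : V} (hx : x ∈ S) : ∃ u, G.Adj x u ∧ u ∉ S := by
  -- first, x has some neighbor
  obtain ⟨y, hy⟩ : ∃ y, y ≠ x := Fintype.exists_ne_of_one_lt_card (by omega) x
  obtain ⟨p⟩ := hconn.preconnected x y
  have hadj : ∃ z, G.Adj x z := by
    cases p with
    | nil => exact absurd rfl hy
    | cons h q => exact ⟨_, h⟩
  obtain ⟨z, hz⟩ := hadj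
  by_cases hzS : z ∈ S
  · -- use the private fort of z
    obtain ⟨F, hF, hFz⟩ := hS z hzS
    have hzF : z ∈ F := by
      have : z ∈ S ∩ F := hFz ▸ rfl
      exact this.2
    have hxF : x ∉ F := by
      intro hxF
      have : x ∈ S ∩ F := ⟨hx, hxF⟩
      rw [hFz] at this
      exact G.ne_of_adj hz this
    obtain ⟨w, hwF, hwz, hadjw⟩ := hF.2 x hxF z hzF hz
    refine ⟨w, hadjw, fun hwS => ?_⟩
    have : w ∈ S ∩ F := ⟨hwS, hwF⟩
    rw [hFz] at this
    exact hwz this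
  · exact ⟨z, hz, hzS⟩

/-- The key cardinality bound for ZIr sets. -/
lemma isZIr_card_bound {V : Type*} [Fintype V] (G : SimpleGraph V)
    [DecidableRel G.Adj] (hn : 2 ≤ Fintype.card V) (hconn : G.Connected) {S : Set V}
    (hS : IsZIr G S) :
    (G.maxDegree + 1) * S.ncard ≤ G.maxDegree * Fintype.card V := by
  classical
  set Δ := G.maxDegree with hΔ
  -- choose for each x ∈ S a neighbor outside S
  have hch : ∀ x : V, x ∈ S → ∃ u, G.Adj x u ∧ u ∉ S :=
    fun x hx => exists_adj_notMem_of_isZIr G hn hconn hS hx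
  let f : V → V := fun x => if h : x ∈ S then (hch x h).choose else x
  have hf1 : ∀ x ∈ S, G.Adj x (f x) := by
    intro x hx
    simp only [f, dif_pos hx]
    exact (hch x hx).choose_spec.1
  have hf2 : ∀ x ∈ S, f x ∉ S := by
    intro x hx
    simp only [f, dif_pos hx]
    exact (hch x hx).choose_spec.2
  set s : Finset V := S.toFinset with hs
  have hsx : ∀ x, x ∈ s ↔ x ∈ S := fun x => Set.mem_toFinset
  -- the image is contained in the complement
  have himage : s.image f ⊆ Finset.univ \ s := by
    intro u hu
    obtain ⟨x, hx, rfl⟩ := Finset.mem_image.mp hu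
    simp only [Finset.mem_sdiff, Finset.mem_univ, true_and]
    rw [hsx]
    exact hf2 x ((hsx x).mp hx)
  have hcard1 : s.card ≤ Δ * (s.image f).card := by
    apply Finset.card_le_mul_card_image
    intro u _
    have hsub : {a ∈ s | f a = u} ⊆ G.neighborFinset u := by
      intro a ha
      obtain ⟨ha1, ha2⟩ := Finset.mem_filter.mp ha
      rw [SimpleGraph.mem_neighborFinset]
      exact (ha2 ▸ hf1 a ((hsx a).mp ha1)).symm
    calc {a ∈ s | f a = u}.card ≤ (G.neighborFinset u).card := Finset.card_le_card hsub
      _ = G.degree u := (G.card_neighborFinset_eq_degree u).symm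
      _ ≤ Δ := G.degree_le_maxDegree u
  have hcard2 : (s.image f).card ≤ Fintype.card V - s.card := by
    calc (s.image f).card ≤ (Finset.univ \ s).card := Finset.card_le_card himage
      _ = Fintype.card V - s.card := by rw [Finset.card_sdiff_of_subset (Finset.subset_univ s),
            Finset.card_univ]
  have hle : s.card ≤ Fintype.card V := by
    rw [← Finset.card_univ]; exact Finset.card_le_card (Finset.subset_univ s)
  have hncard : S.ncard = s.card := Set.ncard_eq_toFinset_card' S
  rw [hncard]
  calc (Δ + 1) * s.card = Δ * s.card + s.card := by ring
    _ ≤ Δ * s.card + Δ * (Fintype.card V - s.card) := by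
        have := le_trans hcard1 (Nat.mul_le_mul_left Δ hcard2)
        omega
    _ = Δ * (s.card + (Fintype.card V - s.card)) := by rw [Nat.mul_add]
    _ = Δ * Fintype.card V := by rw [Nat.add_sub_cancel' hle]

theorem ZIR_le_maxDegree_bound {V : Type*} [Fintype V] (G : SimpleGraph V)
    [DecidableRel G.Adj] (hn : 2 ≤ Fintype.card V) (hconn : G.Connected) :
    (ZIR G : ℚ) ≤ (G.maxDegree : ℚ) / (G.maxDegree + 1) * Fintype.card V := by
  set A : Set ℕ := {n | ∃ S : Set V, IsMaxZIr G S ∧ S.ncard = n} with hA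
  have hbound : ∀ k ∈ A, (k : ℚ) ≤ (G.maxDegree : ℚ) / (G.maxDegree + 1) * Fintype.card V := by
    rintro k ⟨S, hSmax, rfl⟩
    have hnat : (G.maxDegree + 1) * S.ncard ≤ G.maxDegree * Fintype.card V :=
      isZIr_card_bound G hn hconn hSmax.1
    rw [div_mul_eq_mul_div, le_div_iff₀ (by positivity)]
    have : ((G.maxDegree + 1) * S.ncard : ℚ) ≤ (G.maxDegree * Fintype.card V : ℚ) := by
      exact_mod_cast hnat
    linarith
  rcases A.eq_empty_or_nonempty with hAe | hAne
  · have : ZIR G = 0 := by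
      unfold ZIR
      rw [← hA, hAe]
      simp [csSup_empty]
    rw [this]
    positivity
  · have hbdd : BddAbove A := by
      refine ⟨Fintype.card V, fun k hk => ?_⟩
      obtain ⟨S, _, rfl⟩ := hk
      simpa [Set.ncard_univ, Nat.card_eq_fintype_card] using Set.ncard_le_ncard (Set.subset_univ S) Set.finite_univ
    have hmem : sSup A ∈ A := Nat.sSup_mem hAne hbdd
    have : ZIR G = sSup A := rfl
    rw [this]
    exact hbound _ hmem
end

section
/- In the complete graph K_n with n ≥ 2, every maximal Z-irredundant set has cardinality exactly n − 1; that is, zir(K_n) = ZIR(K_n) = n − 1. -/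
lemma key_zir {n : ℕ} (hn : 2 ≤ n) (S : Set (Fin n)) :
    IsZIr (⊤ : SimpleGraph (Fin n)) S ↔ S ≠ Set.univ := by
  constructor
  · rintro h rfl
    set a : Fin n := ⟨0, by omega⟩
    set b : Fin n := ⟨1, by omega⟩
    have hab : b ≠ a := by simp [a, b, Fin.ext_iff]
    obtain ⟨F, ⟨hne, hF⟩, hSF⟩ := h a (Set.mem_univ a)
    have hF0 : F = {a} := by simpa using hSF
    have hbF : b ∉ F := by simp [hF0, hab]
    obtain ⟨w', hw', hne', _⟩ := hF b hbF a (by simp [hF0]) (by simp [hab])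
    rw [hF0] at hw'
    exact hne' hw'
  · intro hne x hx
    obtain ⟨y, hy⟩ := Set.ne_univ_iff_exists_notMem S |>.mp hne
    have hxy : x ≠ y := fun h => hy (h ▸ hx)
    refine ⟨{x, y}, ⟨⟨x, by simp⟩, ?_⟩, ?_⟩
    · intro v hv w hw _
      simp only [Set.mem_insert_iff, Set.mem_singleton_iff] at hv hw
      push_neg at hv
      rcases hw with rfl | rfl
      · exact ⟨y, by simp, (Ne.symm hxy), by simp [hv.2]⟩
      · exact ⟨x, by simp, hxy, by simp [hv.1]⟩
    · ext z
      simp only [Set.mem_inter_iff, Set.mem_insert_iff, Set.mem_singleton_iff]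
      constructor
      · rintro ⟨hz, rfl | rfl⟩
        · rfl
        · exact absurd hz hy
      · rintro rfl; exact ⟨hx, Or.inl rfl⟩

lemma max_iff {n : ℕ} (hn : 2 ≤ n) (S : Set (Fin n)) :
    IsMaxZIr (⊤ : SimpleGraph (Fin n)) S ↔ ∃ y, S = {y}ᶜ := by
  constructor
  · rintro ⟨hZ, hmax⟩
    have hS := (key_zir hn S).mp hZ
    obtain ⟨y, hy⟩ := Set.ne_univ_iff_exists_notMem S |>.mp hS
    refine ⟨y, ?_⟩
    have hU : S ∪ {y} = Set.univ := by
      by_contra hne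
      have hT := (key_zir hn (S ∪ {y})).mpr hne
      have := hmax _ hT (Set.subset_union_left)
      exact hy (this ▸ Set.mem_union_right S rfl)
    ext z
    simp only [Set.mem_compl_iff, Set.mem_singleton_iff]
    constructor
    · rintro hz rfl; exact hy hz
    · intro hz
      have := Set.mem_univ z
      rw [← hU] at this
      rcases this with h | h
      · exact h
      · exact absurd h hz
  · rintro ⟨y, rfl⟩
    constructor
    · exact (key_zir hn _).mpr (fun h => by
        have : y ∈ ({y}ᶜ : Set (Fin n)) := h ▸ Set.mem_univ y
        simp at this)
    · intro T hT hsub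
      obtain ⟨z, hz⟩ := Set.ne_univ_iff_exists_notMem T |>.mp ((key_zir hn T).mp hT)
      have hzy : z = y := by
        by_contra h
        exact hz (hsub (by simpa using h))
      apply Set.Subset.antisymm hsub
      intro t ht
      simp only [Set.mem_compl_iff, Set.mem_singleton_iff]
      rintro rfl
      exact hz (hzy ▸ ht)

lemma compl_card {n : ℕ} (y : Fin n) : ({y}ᶜ : Set (Fin n)).ncard = n - 1 := by
  have h := Set.ncard_add_ncard_compl ({y} : Set (Fin n))
  simp only [Set.ncard_singleton, Nat.card_eq_fintype_card, Fintype.card_fin] at h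
  omega

theorem complete_graph_maxZIr_card {n : ℕ} (hn : 2 ≤ n) :
    (∀ S : Set (Fin n), IsMaxZIr (⊤ : SimpleGraph (Fin n)) S →
        S.ncard = n - 1) ∧
      zir (⊤ : SimpleGraph (Fin n)) = n - 1 ∧
      ZIR (⊤ : SimpleGraph (Fin n)) = n - 1 := by
  have hcard : ∀ S : Set (Fin n), IsMaxZIr (⊤ : SimpleGraph (Fin n)) S →
      S.ncard = n - 1 := by
    intro S hS
    obtain ⟨y, rfl⟩ := (max_iff hn S).mp hS
    exact compl_card y
  have hset : {m | ∃ S : Set (Fin n), IsMaxZIr (⊤ : SimpleGraph (Fin n)) S ∧ S.ncard = m}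
      = {n - 1} := by
    ext m
    simp only [Set.mem_setOf_eq, Set.mem_singleton_iff]
    constructor
    · rintro ⟨S, hS, rfl⟩; exact hcard S hS
    · rintro rfl
      exact ⟨{(⟨0, by omega⟩ : Fin n)}ᶜ, (max_iff hn _).mpr ⟨_, rfl⟩, compl_card _⟩
  refine ⟨hcard, ?_, ?_⟩
  · rw [zir, hset]; exact csInf_singleton _
  · rw [ZIR, hset]; exact csSup_singleton _
end

section
/- In the complete bipartite graph K_{q,p} with 1 ≤ q ≤ p and partite sets U (|U| = q) and W (|W| = p): (a) any set S omitting at least one vertex of U and at least one vertex of W is a ZIr-set; (b) the partite set U is a maximal ZIr-set; consequently zir(K_{q,p}) = q. -/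
lemma fortL {q p : ℕ} {u u' : Fin q} (h : u ≠ u') :
    IsFort (completeBipartiteGraph (Fin q) (Fin p)) {Sum.inl u, Sum.inl u'} := by
  refine ⟨⟨Sum.inl u, by simp⟩, ?_⟩
  rintro v hv w hw hadj
  simp only [Set.mem_insert_iff, Set.mem_singleton_iff] at hw
  rcases v with v | v
  · rcases hw with rfl | rfl <;> simp at hadj
  · rcases hw with rfl | rfl
    · exact ⟨Sum.inl u', by simp, by simp [h.symm, h], by simp⟩
    · exact ⟨Sum.inl u, by simp, by simp [h.symm, h], by simp⟩

lemma fortR {q p : ℕ} {w w' : Fin p} (h : w ≠ w') :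
    IsFort (completeBipartiteGraph (Fin q) (Fin p)) {Sum.inr w, Sum.inr w'} := by
  refine ⟨⟨Sum.inr w, by simp⟩, ?_⟩
  rintro v hv x hx hadj
  simp only [Set.mem_insert_iff, Set.mem_singleton_iff] at hx
  rcases v with v | v
  · rcases hx with rfl | rfl
    · exact ⟨Sum.inr w', by simp, by simp [h.symm, h], by simp⟩
    · exact ⟨Sum.inr w, by simp, by simp [h.symm, h], by simp⟩
  · rcases hx with rfl | rfl <;> simp at hadj

lemma fortU {q p : ℕ} (hqp : q ≤ p) (u : Fin q) :
    IsFort (completeBipartiteGraph (Fin q) (Fin p))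
      ({Sum.inl u} ∪ Set.range Sum.inr) := by
  refine ⟨⟨Sum.inl u, by simp⟩, ?_⟩
  rintro v hv w hw hadj
  rcases v with v | v
  swap
  · exact absurd (by simp : Sum.inr v ∈ _) hv
  have hvu : v ≠ u := by rintro rfl; exact hv (by simp)
  rcases w with w | w
  · simp at hadj
  · have hq2 : Nontrivial (Fin q) := nontrivial_of_ne v u hvu
    have : Nontrivial (Fin p) := Fin.nontrivial_iff_two_le.mpr
      (le_trans (Fin.nontrivial_iff_two_le.mp hq2) hqp)
    obtain ⟨w', hw'⟩ := exists_ne w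
    exact ⟨Sum.inr w', by simp, by simp [hw'], by simp⟩

lemma ZIr_rangeL {q p : ℕ} (hqp : q ≤ p) :
    IsZIr (completeBipartiteGraph (Fin q) (Fin p)) (Set.range Sum.inl) := by
  rintro x ⟨u, rfl⟩
  refine ⟨{Sum.inl u} ∪ Set.range Sum.inr, fortU hqp u, ?_⟩
  ext x
  rcases x with v | v <;> simp

lemma partA {q p : ℕ} (S : Set (Fin q ⊕ Fin p))
    (hU : ∃ u : Fin q, Sum.inl u ∉ S) (hW : ∃ w : Fin p, Sum.inr w ∉ S) :
    IsZIr (completeBipartiteGraph (Fin q) (Fin p)) S := by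
  obtain ⟨u0, hu0⟩ := hU
  obtain ⟨w0, hw0⟩ := hW
  rintro (u | w) hx
  · have hne : u ≠ u0 := by rintro rfl; exact hu0 hx
    refine ⟨{Sum.inl u, Sum.inl u0}, fortL hne, ?_⟩
    ext y
    simp only [Set.mem_inter_iff, Set.mem_insert_iff, Set.mem_singleton_iff]
    constructor
    · rintro ⟨hyS, rfl | rfl⟩
      · rfl
      · exact absurd hyS hu0
    · rintro rfl; exact ⟨hx, Or.inl rfl⟩
  · have hne : w ≠ w0 := by rintro rfl; exact hw0 hx
    refine ⟨{Sum.inr w, Sum.inr w0}, fortR hne, ?_⟩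
    ext y
    simp only [Set.mem_inter_iff, Set.mem_insert_iff, Set.mem_singleton_iff]
    constructor
    · rintro ⟨hyS, rfl | rfl⟩
      · rfl
      · exact absurd hyS hw0
    · rintro rfl; exact ⟨hx, Or.inl rfl⟩

lemma maxL {q p : ℕ} (hq : 1 ≤ q) :
    ∀ T, IsZIr (completeBipartiteGraph (Fin q) (Fin p)) T →
      Set.range Sum.inl ⊆ T → (Set.range Sum.inl : Set (Fin q ⊕ Fin p)) = T := by
  intro T hT hsub
  refine hsub.antisymm ?_
  rintro (u | w0) hx
  · exact ⟨u, rfl⟩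
  exfalso
  set u : Fin q := ⟨0, hq⟩
  obtain ⟨F, ⟨hFne, hfort⟩, hint⟩ := hT (Sum.inl u) (hsub ⟨u, rfl⟩)
  have huF : Sum.inl u ∈ F := by
    have : Sum.inl u ∈ T ∩ F := by rw [hint]; exact Set.mem_singleton _
    exact this.2
  have hw0F : Sum.inr w0 ∉ F := by
    intro h
    have : Sum.inr w0 ∈ T ∩ F := ⟨hx, h⟩
    rw [hint] at this; simp at this
  obtain ⟨w', hw'F, hw'ne, hadj⟩ := hfort _ hw0F _ huF (by simp)
  rcases w' with u' | w'
  · have : Sum.inl u' ∈ T ∩ F := ⟨hsub ⟨u', rfl⟩, hw'F⟩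
    rw [hint] at this
    exact hw'ne this
  · simp at hadj

lemma cardL {q p : ℕ} :
    (Set.range (Sum.inl : Fin q → Fin q ⊕ Fin p)).ncard = q := by
  rw [← Set.image_univ, Set.ncard_image_of_injective _ Sum.inl_injective,
    Set.ncard_univ, Nat.card_eq_fintype_card, Fintype.card_fin]

lemma cardR {q p : ℕ} :
    (Set.range (Sum.inr : Fin p → Fin q ⊕ Fin p)).ncard = p := by
  rw [← Set.image_univ, Set.ncard_image_of_injective _ Sum.inr_injective,
    Set.ncard_univ, Nat.card_eq_fintype_card, Fintype.card_fin]

lemma lowerB {q p : ℕ} (hq : 1 ≤ q) (hqp : q ≤ p) (S : Set (Fin q ⊕ Fin p))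
    (hmax : IsMaxZIr (completeBipartiteGraph (Fin q) (Fin p)) S) : q ≤ S.ncard := by
  by_contra hlt
  push_neg at hlt
  obtain ⟨hZ, hM⟩ := hmax
  have hSfin : S.Finite := Set.toFinite S
  have hu0 : ∃ u0 : Fin q, Sum.inl u0 ∉ S := by
    by_contra h
    push_neg at h
    have hsub : Set.range (Sum.inl : Fin q → Fin q ⊕ Fin p) ⊆ S := by
      rintro x ⟨u, rfl⟩; exact h u
    have := Set.ncard_le_ncard hsub hSfin
    rw [cardL] at this
    omega
  have hw0 : ∃ w0 : Fin p, Sum.inr w0 ∉ S := by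
    by_contra h
    push_neg at h
    have hsub : Set.range (Sum.inr : Fin p → Fin q ⊕ Fin p) ⊆ S := by
      rintro x ⟨w, rfl⟩; exact h w
    have := Set.ncard_le_ncard hsub hSfin
    rw [cardR] at this
    omega
  obtain ⟨u0, hu0⟩ := hu0
  obtain ⟨w0, hw0⟩ := hw0
  set T : Set (Fin q ⊕ Fin p) := insert (Sum.inl u0) S with hT
  have hw0T : Sum.inr w0 ∉ T := by
    simp only [hT, Set.mem_insert_iff]
    push_neg
    exact ⟨by simp, hw0⟩
  have hTZ : IsZIr (completeBipartiteGraph (Fin q) (Fin p)) T := by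
    by_cases hcase : ∃ u1 : Fin q, Sum.inl u1 ∉ T
    · exact partA T hcase ⟨w0, hw0T⟩
    · push_neg at hcase
      have hsub : Set.range (Sum.inl : Fin q → Fin q ⊕ Fin p) \ {Sum.inl u0} ⊆ S := by
        rintro x ⟨⟨u, rfl⟩, hne⟩
        rcases hcase u with h | h
        · exact absurd h hne
        · exact h
      have hdc : ((Set.range (Sum.inl : Fin q → Fin q ⊕ Fin p)) \ {Sum.inl u0}).ncard
          = q - 1 := by
        rw [Set.ncard_diff_singleton_of_mem (Set.mem_range_self u0), cardL]
      have hSeq : S = Set.range (Sum.inl : Fin q → Fin q ⊕ Fin p) \ {Sum.inl u0} := by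
        refine (Set.eq_of_subset_of_ncard_le hsub ?_ hSfin).symm
        rw [hdc]; omega
      have hTeq : T = Set.range (Sum.inl : Fin q → Fin q ⊕ Fin p) := by
        rw [hT, hSeq]
        rw [Set.insert_diff_singleton, Set.insert_eq_of_mem (Set.mem_range_self u0)]
      rw [hTeq]
      exact ZIr_rangeL hqp
  have := hM T hTZ (Set.subset_insert _ _)
  rw [this] at hu0
  exact hu0 (Set.mem_insert _ _)

theorem completeBipartite_zir {q p : ℕ} (hq : 1 ≤ q) (hqp : q ≤ p) :
    (∀ S : Set (Fin q ⊕ Fin p),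
        (∃ u : Fin q, Sum.inl u ∉ S) → (∃ w : Fin p, Sum.inr w ∉ S) →
        IsZIr (completeBipartiteGraph (Fin q) (Fin p)) S) ∧
      IsMaxZIr (completeBipartiteGraph (Fin q) (Fin p))
        (Set.range Sum.inl) ∧
      zir (completeBipartiteGraph (Fin q) (Fin p)) = q := by
  have hmax : IsMaxZIr (completeBipartiteGraph (Fin q) (Fin p)) (Set.range Sum.inl) :=
    ⟨ZIr_rangeL hqp, maxL hq⟩
  refine ⟨fun S hU hW => partA S hU hW, hmax, ?_⟩
  have hmem : q ∈ {n | ∃ S : Set (Fin q ⊕ Fin p),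
      IsMaxZIr (completeBipartiteGraph (Fin q) (Fin p)) S ∧ S.ncard = n} :=
    ⟨Set.range Sum.inl, hmax, cardL⟩
  refine le_antisymm (Nat.sInf_le hmem) (le_csInf ⟨q, hmem⟩ ?_)
  rintro n ⟨S, hS, rfl⟩
  exact lowerB hq hqp S hS
end

section
/- Let C_n be the cycle on n ≥ 4 vertices v_1,...,v_n. If S is a ZIr-set of C_n containing two adjacent vertices, then |S| = 2. Moreover the set of odd-indexed vertices {v_1, v_3, ..., v_{2⌊n/2⌋−1}} is a ZIr-set, and ZIR(C_n) = ⌊n/2⌋. -/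
/-!
In a cycle the complement of a fort `F` contains no edge: if `v, v + 1 ∉ F` then `v + 2 ∉ F`,
since otherwise `v + 1` would have exactly one neighbour in `F`, and walking around the cycle
empties `F`. So the private fort of a third element of a ZIr-set would miss both ends of an edge
of the set: a ZIr-set containing an edge is that edge. Any other ZIr-set `S` is independent,
hence disjoint from its shift `S + 1`, so `|S| ≤ ⌊n/2⌋`. Conversely, as every vertex has two
neighbours, `(S \ {x})ᶜ` is a private fort of `x` in any independent set `S`.
-/

open SimpleGraph

section General

variable {V : Type*} {G : SimpleGraph V}

theorem isFort_of_isIndepSet_compl (hG : ∀ v w, G.Adj v w → ∃ w', w' ≠ w ∧ G.Adj v w')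
    {F : Set V} (hne : F.Nonempty) (hF : G.IsIndepSet Fᶜ) : IsFort G F := by
  refine ⟨hne, fun v hv w _ hvw => ?_⟩
  obtain ⟨w', hw'w, hvw'⟩ := hG v w hvw
  refine ⟨w', by_contra fun hw' => hF hv hw' hvw'.ne hvw', hw'w, hvw'⟩

theorem SimpleGraph.IsIndepSet.isZIr (hG : ∀ v w, G.Adj v w → ∃ w', w' ≠ w ∧ G.Adj v w')
    {S : Set V} (hS : G.IsIndepSet S) : IsZIr G S := by
  intro x hx
  refine ⟨(S \ {x})ᶜ, isFort_of_isIndepSet_compl hG ⟨x, by simp⟩ ?_, ?_⟩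
  · rw [compl_compl]
    exact hS.mono Set.sdiff_subset
  · ext y
    simp only [Set.mem_inter_iff, Set.mem_compl_iff, Set.mem_sdiff, Set.mem_singleton_iff]
    constructor
    · exact fun ⟨hy, h⟩ => by_contra fun hyx => h ⟨hy, hyx⟩
    · rintro rfl
      exact ⟨hx, fun h => h.2 rfl⟩

theorem eq_pair_of_isZIr_of_adj (hG : ∀ F, IsFort G F → G.IsIndepSet Fᶜ) {S : Set V}
    (hS : IsZIr G S) {u v : V} (hu : u ∈ S) (hv : v ∈ S) (huv : G.Adj u v) : S = {u, v} := by
  refine subset_antisymm (fun z hz => ?_) (Set.insert_subset hu (Set.singleton_subset_iff.2 hv))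
  obtain ⟨F, hF, hSF⟩ := hS z hz
  have private_eq {y} (hy : y ∈ S) (hyF : y ∈ F) : y = z := by
    have hy' : y ∈ S ∩ F := ⟨hy, hyF⟩
    rwa [hSF] at hy'
  by_contra hz'
  simp only [Set.mem_insert_iff, Set.mem_singleton_iff, not_or] at hz'
  exact hG F hF (fun h => hz'.1 (private_eq hu h).symm) (fun h => hz'.2 (private_eq hv h).symm)
    huv.ne huv

theorem ZIR_eq_of_isZIr_of_forall_ncard_le [Finite V] {S : Set V} {m : ℕ} (hS : IsZIr G S)
    (hcard : S.ncard = m) (hle : ∀ T, IsZIr G T → T.ncard ≤ m) : ZIR G = m := by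
  have hmax : IsMaxZIr G S :=
    ⟨hS, fun T hT hST => Set.eq_of_subset_of_ncard_le hST (hcard ▸ hle T hT)⟩
  refine IsGreatest.csSup_eq ⟨⟨S, hmax, hcard⟩, ?_⟩
  rintro _ ⟨T, hT, rfl⟩
  exact hle T hT.1

end General

section Cycle

open Fin.NatCast

variable {n : ℕ}

theorem cycleGraph_adj_iff {v w : Fin (n + 2)} :
    (cycleGraph (n + 2)).Adj v w ↔ w = v - 1 ∨ w = v + 1 := by
  rw [← mem_neighborSet, cycleGraph_neighborSet]
  rfl

theorem cycleGraph_adj_add_one (v : Fin (n + 2)) : (cycleGraph (n + 2)).Adj v (v + 1) :=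
  cycleGraph_adj_iff.2 (Or.inr rfl)

theorem isIndepSet_compl_of_isFort_cycleGraph {F : Set (Fin (n + 2))}
    (hF : IsFort (cycleGraph (n + 2)) F) : (cycleGraph (n + 2)).IsIndepSet Fᶜ := by
  have step {v} (hv : v ∉ F) (hv1 : v + 1 ∉ F) : v + 1 + 1 ∉ F := fun hv2 => by
    obtain ⟨w, hwF, hw, hadj⟩ := hF.2 _ hv1 _ hv2 (cycleGraph_adj_add_one _)
    rcases cycleGraph_adj_iff.1 hadj with rfl | rfl
    · exact hv (by simpa using hwF)
    · exact hw rfl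
  have chain {u} (hu : u ∉ F) (hu1 : u + 1 ∉ F) (k : ℕ) : u + k ∉ F := by
    induction k generalizing u with
    | zero => simpa using hu
    | succ k ih =>
      simpa [Nat.cast_succ, add_comm (k : Fin (n + 2)), add_assoc] using ih hu1 (step hu hu1)
  intro a ha b hb _ hab
  obtain ⟨c, hc⟩ := hF.1
  have no_gap {u} (hu : u ∉ F) (hu1 : u + 1 ∉ F) : False :=
    chain hu hu1 (c - u).val (by simpa using hc)
  rcases cycleGraph_adj_iff.1 hab with rfl | rfl
  · exact no_gap hb (by simpa using ha)
  · exact no_gap ha hb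

theorem cycleGraph_exists_other_adj {v w : Fin (n + 3)} (h : (cycleGraph (n + 3)).Adj v w) :
    ∃ w', w' ≠ w ∧ (cycleGraph (n + 3)).Adj v w' := by
  have hne : v - 1 ≠ v + 1 := by
    rw [Ne, sub_eq_iff_eq_add, add_assoc, left_eq_add, Fin.ext_iff, Fin.val_add, Fin.val_one,
      Fin.val_zero, Nat.mod_eq_of_lt (by omega)]
    omega
  rcases cycleGraph_adj_iff.1 h with rfl | rfl
  · exact ⟨v + 1, hne.symm, cycleGraph_adj_add_one v⟩
  · exact ⟨v - 1, hne, cycleGraph_adj_iff.2 (Or.inl rfl)⟩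

theorem ncard_le_half_of_isIndepSet_cycleGraph {S : Set (Fin (n + 2))}
    (hS : (cycleGraph (n + 2)).IsIndepSet S) : S.ncard ≤ (n + 2) / 2 := by
  have hdisj : Disjoint S ((· + 1) '' S) := by
    refine Set.disjoint_left.2 fun b hb ⟨a, ha, hab⟩ => ?_
    subst hab
    exact hS ha hb (cycleGraph_adj_add_one a).ne (cycleGraph_adj_add_one a)
  have hunion := Set.ncard_union_eq hdisj
  rw [Set.ncard_image_of_injective _ (add_left_injective 1)] at hunion
  have hle := Set.ncard_le_card (S ∪ (· + 1) '' S)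
  rw [Nat.card_fin] at hle
  omega

theorem ncard_eq_two_of_isZIr_cycleGraph_of_adj {S : Set (Fin (n + 2))}
    (hS : IsZIr (cycleGraph (n + 2)) S) {u v : Fin (n + 2)} (hu : u ∈ S) (hv : v ∈ S)
    (huv : (cycleGraph (n + 2)).Adj u v) : S.ncard = 2 := by
  rw [eq_pair_of_isZIr_of_adj (fun _ => isIndepSet_compl_of_isFort_cycleGraph) hS hu hv huv,
    Set.ncard_pair huv.ne]

theorem ncard_le_half_of_isZIr_cycleGraph {S : Set (Fin (n + 4))}
    (hS : IsZIr (cycleGraph (n + 4)) S) : S.ncard ≤ (n + 4) / 2 := by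
  by_cases hind : (cycleGraph (n + 4)).IsIndepSet S
  · exact ncard_le_half_of_isIndepSet_cycleGraph hind
  · obtain ⟨u, hu, v, hv, -, huv⟩ :
        ∃ u ∈ S, ∃ v ∈ S, u ≠ v ∧ (cycleGraph (n + 4)).Adj u v := by
      simpa [Set.Pairwise] using hind
    rw [ncard_eq_two_of_isZIr_cycleGraph_of_adj hS hu hv huv]
    omega

/-- With `0`-based indices these are the paper's vertices `v_1, v_3, …, v_{2⌊n/2⌋-1}`. -/
def evenVertices (n : ℕ) : Set (Fin n) :=
  {v | v.val % 2 = 0 ∧ v.val + 1 < n}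

theorem isIndepSet_evenVertices : (cycleGraph (n + 2)).IsIndepSet (evenVertices (n + 2)) := by
  have not_succ {u v} (hu : u ∈ evenVertices (n + 2)) (hv : v ∈ evenVertices (n + 2)) :
      v ≠ u + 1 := fun h => by
    have := Fin.val_add_one_of_lt' hu.2
    rw [← h] at this
    have := hu.1
    have := hv.1
    omega
  intro a ha b hb _ hab
  rcases cycleGraph_adj_iff.1 hab with rfl | rfl
  · exact not_succ hb ha (sub_add_cancel a 1).symm
  · exact not_succ ha hb rfl

theorem ncard_evenVertices : (evenVertices n).ncard = n / 2 := by
  let double (k : Fin (n / 2)) : Fin n := ⟨2 * k, by omega⟩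
  have hrange : evenVertices n = Set.range double := by
    ext v
    refine ⟨fun ⟨h2, hlt⟩ => ⟨⟨v / 2, by omega⟩, Fin.ext (show 2 * (v / 2) = v.val by omega)⟩,
      ?_⟩
    rintro ⟨k, rfl⟩
    exact ⟨show 2 * k.val % 2 = 0 by omega, show 2 * k.val + 1 < n by omega⟩
  rw [hrange, Set.ncard_range_of_injective (fun a b h => Fin.ext (by simpa [double] using h)),
    Nat.card_fin]

end Cycle

theorem cycle_zir_adjacent_and_ZIR {n : ℕ} (hn : 4 ≤ n) :
    (∀ S : Set (Fin n), IsZIr (SimpleGraph.cycleGraph n) S →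
        (∃ u ∈ S, ∃ v ∈ S, (SimpleGraph.cycleGraph n).Adj u v) →
        S.ncard = 2) ∧
      IsZIr (SimpleGraph.cycleGraph n)
        {v : Fin n | v.val % 2 = 0 ∧ v.val + 1 < n} ∧
      ZIR (SimpleGraph.cycleGraph n) = n / 2 := by
  obtain ⟨n, rfl⟩ : ∃ m, n = m + 4 := ⟨n - 4, by omega⟩
  have hZIr : IsZIr (cycleGraph (n + 4)) (evenVertices (n + 4)) :=
    isIndepSet_evenVertices.isZIr fun _ _ => cycleGraph_exists_other_adj
  exact ⟨fun S hS ⟨u, hu, v, hv, huv⟩ => ncard_eq_two_of_isZIr_cycleGraph_of_adj hS hu hv huv,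
    hZIr, ZIR_eq_of_isZIr_of_forall_ncard_le hZIr ncard_evenVertices
      fun _ => ncard_le_half_of_isZIr_cycleGraph⟩
end

section
/- Let G be a graph of order n and let S be a ZIr-set of G. If x_1,...,x_k ∈ S are distinct vertices with private forts F_1,...,F_k respectively (relative to S), then |S| ≤ n − |F_1 ∪ ... ∪ F_k| + k. -/
theorem zir_card_bound {V : Type*} [Fintype V] (G : SimpleGraph V)
    (S : Set V) (hS : IsZIr G S) (k : ℕ) (x : Fin k → V)
    (hinj : Function.Injective x) (hxS : ∀ i, x i ∈ S)
    (F : Fin k → Set V)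
    (hF : ∀ i, IsFort G (F i) ∧ S ∩ F i = {x i}) :
    S.ncard ≤ Fintype.card V - (⋃ i, F i).ncard + k := by
  classical
  set U := ⋃ i, F i with hU
  have hSU : S ∩ U ⊆ Set.range x := by
    rintro v ⟨hvS, hvU⟩
    obtain ⟨i, hvi⟩ := Set.mem_iUnion.mp hvU
    have : v ∈ S ∩ F i := ⟨hvS, hvi⟩
    rw [(hF i).2] at this
    exact ⟨i, this.symm⟩
  have hsplit : (S ∩ U).ncard + (S \ U).ncard = S.ncard :=
    Set.ncard_inter_add_ncard_diff_eq_ncard S U (Set.toFinite _)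
  have h1 : (S ∩ U).ncard ≤ k := by
    calc (S ∩ U).ncard ≤ (Set.range x).ncard := Set.ncard_le_ncard hSU (Set.toFinite _)
    _ ≤ k := by
        rw [← Nat.card_coe_set_eq, Nat.card_range_of_injective hinj, Nat.card_eq_fintype_card,
          Fintype.card_fin]
  have h2 : (S \ U).ncard ≤ Fintype.card V - U.ncard := by
    have hsub : S \ U ⊆ Uᶜ := fun v hv => hv.2
    have : (S \ U).ncard ≤ Uᶜ.ncard := Set.ncard_le_ncard hsub (Set.toFinite _)
    have hc : U.ncard + Uᶜ.ncard = Fintype.card V := by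
      rw [Set.ncard_add_ncard_compl U (Set.toFinite _) (Set.toFinite _), Nat.card_eq_fintype_card]
    omega
  omega
end
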